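/- Let the generalized residual be Ψ = S(X,W)·τ(X) − s̃(X)·(W−e(X))·Y + ξ(X,W), where S and ξ are bounded measurable real functions on 𝒳×{0,1} with E[ξ(X,W) | σ(X)] = 0 a.s., s(X) = E[S(X,W) | σ(X)], s̃(X) = s(X)/(e(X)(1−e(X))), and 0 < s̃(X) ≤ M a.s. for some constant M > 0 (the Stable Probability Weighting principle). Then under unconfoundedness, SUTVA, population overlap and bounded outcomes, E[Ψ | σ(X)] = 0 a.s. and the conditional variance E[Ψ² | σ(X)] is almost surely finite (indeed a.s. bounded). -/

import Mathlib

open MeasureTheory ProbabilityTheory Filter Set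

/-- The sub-σ-algebra σ(X) generated by a random element `X`. -/
abbrev sigmaAlg {Ω 𝒳 : Type*} [m𝒳 : MeasurableSpace 𝒳] (X : Ω → 𝒳) : MeasurableSpace Ω :=
  MeasurableSpace.comap X m𝒳

/-!
Given σ(X), unconfoundedness makes `W` independent of `Y₀` and of `Y₁`, so
`E[W Yᵢ | X] = e μᵢ`; since `W Y = W Y₁`, this gives `E[(W - e) Y | X] = e (1 - e) τ`.
Pulling the σ(X)-measurable factors `τ` and `s̃` out of the conditional expectations,
`E[S τ | X] = s τ = s̃ e (1 - e) τ = E[s̃ (W - e) Y | X]`, and `E[ξ | X] = 0`, so `Ψ` is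
conditionally centred. Every term of `Ψ` is bounded, hence so is `E[Ψ² | X]`.
-/

theorem ProbabilityTheory.CondIndepFun.condExp_mul_ae_eq
    {Ω : Type*} {m' mΩ : MeasurableSpace Ω} [StandardBorelSpace Ω] {hm' : m' ≤ mΩ}
    {μ : Measure Ω} [IsFiniteMeasure μ] {f g : Ω → ℝ}
    (h : CondIndepFun m' hm' f g μ) (hf : Measurable f) (hg : Measurable g)
    (hfi : Integrable f μ) (hgi : Integrable g μ) (hfg : Integrable (f * g) μ) :
    μ[f * g | m'] =ᵐ[μ] μ[f | m'] * μ[g | m'] := by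
  have hker := (condIndepFun_iff_map_prod_eq_prod_map_map hf hg).mp h
  have hind : ∀ᵐ ω ∂μ, f ⟂ᵢ[condExpKernel μ m' ω] g := by
    refine ae_of_ae_trim hm' ?_
    filter_upwards [hker] with ω hω
    rw [indepFun_iff_map_prod_eq_prod_map_map hf.aemeasurable hg.aemeasurable]
    simpa [Kernel.prod_apply, Kernel.map_apply _ hf, Kernel.map_apply _ hg,
      Kernel.map_apply _ (hf.prodMk hg)] using hω
  filter_upwards [condExp_ae_eq_integral_condExpKernel hm' hfg,
    condExp_ae_eq_integral_condExpKernel hm' hfi, condExp_ae_eq_integral_condExpKernel hm' hgi,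
    hind] with ω hfgω hfω hgω hω
  rw [Pi.mul_apply, hfgω, hfω, hgω]
  exact hω.integral_mul_eq_mul_integral hf.aestronglyMeasurable hg.aestronglyMeasurable

theorem MeasureTheory.ae_condExp_sq_le_of_ae_abs_le {Ω : Type*} {m mΩ : MeasurableSpace Ω}
    {μ : Measure Ω} {f : Ω → ℝ} {B : ℝ} (hf : ∀ᵐ ω ∂μ, |f ω| ≤ B) :
    ∀ᵐ ω ∂μ, μ[fun ω ↦ f ω ^ 2 | m] ω ≤ B ^ 2 := by
  have hsq : ∀ᵐ ω ∂μ, |f ω ^ 2| ≤ B ^ 2 := by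
    filter_upwards [hf] with ω h
    simpa [abs_pow] using pow_le_pow_left₀ (abs_nonneg _) h 2
  filter_upwards [ae_bdd_abs_condExp_of_ae_bdd_abs (m := m) hsq] with ω h
  exact (le_abs_self _).trans h

theorem abs_sub_mul_outcome_le {w p y0 y1 C : ℝ} (hw : w = 0 ∨ w = 1) (hp0 : 0 ≤ p) (hp1 : p ≤ 1)
    (hy0 : |y0| ≤ C) (hy1 : |y1| ≤ C) : |(w - p) * (w * y1 + (1 - w) * y0)| ≤ C := by
  rcases hw with rfl | rfl
  · simpa [abs_mul, abs_of_nonneg hp0] using mul_le_of_le_one_left (abs_nonneg _) hp1 |>.trans hy0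
  · simpa [abs_mul, abs_of_nonneg (sub_nonneg.2 hp1)] using
      mul_le_of_le_one_left (abs_nonneg _) (sub_le_self _ hp0) |>.trans hy1

section PotentialOutcomes

variable {Ω : Type*} {m mΩ : MeasurableSpace Ω} [StandardBorelSpace Ω] {hm : m ≤ mΩ}
  {μ : Measure Ω} [IsFiniteMeasure μ] {W Y0 Y1 Y p μ0 μ1 : Ω → ℝ}

theorem condExp_sub_mul_outcome_ae_eq (hW : Measurable W) (hW01 : ∀ ω, W ω = 0 ∨ W ω = 1)
    (hY0 : Measurable Y0) (hY1 : Measurable Y1) (hY0i : Integrable Y0 μ) (hY1i : Integrable Y1 μ)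
    (hY : ∀ ω, Y ω = W ω * Y1 ω + (1 - W ω) * Y0 ω)
    (hind : CondIndepFun m hm W (fun ω ↦ (Y0 ω, Y1 ω)) μ)
    (hp : μ[W | m] =ᵐ[μ] p) (hμ0 : μ[Y0 | m] =ᵐ[μ] μ0) (hμ1 : μ[Y1 | m] =ᵐ[μ] μ1) :
    μ[fun ω ↦ (W ω - p ω) * Y ω | m] =ᵐ[μ] fun ω ↦ p ω * (1 - p ω) * (μ1 ω - μ0 ω) := by
  have hW_bdd : ∀ ω, |W ω| ≤ 1 := fun ω ↦ by rcases hW01 ω with h | h <;> simp [h]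
  have hWi : Integrable W μ := .of_bound hW.aestronglyMeasurable 1 (ae_of_all _ hW_bdd)
  have hp_bdd : ∀ᵐ ω ∂μ, ‖p ω‖ ≤ 1 := by
    filter_upwards [ae_bdd_abs_condExp_of_ae_bdd_abs (m := m) (ae_of_all μ hW_bdd), hp]
      with ω h hω
    rwa [← hω]
  have hWYi {Z : Ω → ℝ} (hZ : Integrable Z μ) : Integrable (W * Z) μ :=
    hZ.bdd_mul hW.aestronglyMeasurable (ae_of_all _ hW_bdd)
  have hY_eq : Y = W * Y1 + (Y0 - W * Y0) := funext fun ω ↦ by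
    simp only [hY, Pi.add_apply, Pi.mul_apply, Pi.sub_apply]; ring
  have hYi : Integrable Y μ := by
    rw [hY_eq]; exact (hWYi hY1i).add (hY0i.sub (hWYi hY0i))
  have hWY1 : μ[W * Y1 | m] =ᵐ[μ] p * μ1 :=
    ((hind.comp measurable_id measurable_snd).condExp_mul_ae_eq hW hY1 hWi hY1i
      (hWYi hY1i)).trans (hp.mul hμ1)
  have hWY0 : μ[W * Y0 | m] =ᵐ[μ] p * μ0 :=
    ((hind.comp measurable_id measurable_fst).condExp_mul_ae_eq hW hY0 hWi hY0i
      (hWYi hY0i)).trans (hp.mul hμ0)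
  have hY_cond : μ[Y | m] =ᵐ[μ] p * μ1 + (μ0 - p * μ0) := by
    rw [hY_eq]
    exact (condExp_add (hWYi hY1i) (hY0i.sub (hWYi hY0i)) m).trans
      (hWY1.add ((condExp_sub hY0i (hWYi hY0i) m).trans (hμ0.sub hWY0)))
  have hp_meas : AEStronglyMeasurable[m] p μ :=
    stronglyMeasurable_condExp.aestronglyMeasurable.congr hp
  have hpY : μ[p * Y | m] =ᵐ[μ] p * μ[Y | m] :=
    condExp_stronglyMeasurable_mul_of_bound₀ hm hp_meas hYi 1 hp_bdd
  have hpYi : Integrable (p * Y) μ := hYi.bdd_mul (hp_meas.mono hm) hp_bdd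
  -- on `{W = 1}` the observed outcome is `Y1`, so `W * Y = W * Y1`
  have hsplit : (fun ω ↦ (W ω - p ω) * Y ω) = W * Y1 - p * Y := by
    funext ω
    rcases hW01 ω with h | h <;> simp [hY ω, h, sub_mul]
  rw [hsplit]
  filter_upwards [condExp_sub (hWYi hY1i) hpYi m, hWY1, hpY, hY_cond] with ω h h1 h2 h3
  simp only [h, Pi.sub_apply, h1, h2, Pi.mul_apply, h3, Pi.add_apply]
  ring

end PotentialOutcomes

section Residual

variable {Ω : Type*} {m mΩ : MeasurableSpace Ω} {μ : Measure Ω} {A τ w Z ξ q : Ω → ℝ}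
  {CA Cτ Cw CZ Cξ : ℝ}

theorem condExp_mul_sub_mul_add_ae_eq_zero [IsFiniteMeasure μ] (hm : m ≤ mΩ) (hA : Measurable A)
    (hτ : StronglyMeasurable[m] τ) (hw : StronglyMeasurable[m] w) (hZ : Measurable Z)
    (hξ : Measurable ξ) (hA_bdd : ∀ᵐ ω ∂μ, |A ω| ≤ CA) (hτ_bdd : ∀ᵐ ω ∂μ, |τ ω| ≤ Cτ)
    (hw_bdd : ∀ᵐ ω ∂μ, |w ω| ≤ Cw) (hZ_bdd : ∀ᵐ ω ∂μ, |Z ω| ≤ CZ) (hξ_bdd : ∀ᵐ ω ∂μ, |ξ ω| ≤ Cξ)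
    (hAc : μ[A | m] =ᵐ[μ] w * q) (hZc : μ[Z | m] =ᵐ[μ] q * τ) (hξc : μ[ξ | m] =ᵐ[μ] 0) :
    μ[fun ω ↦ A ω * τ ω - w ω * Z ω + ξ ω | m] =ᵐ[μ] 0 := by
  have hAi : Integrable A μ := .of_bound hA.aestronglyMeasurable CA hA_bdd
  have hZi : Integrable Z μ := .of_bound hZ.aestronglyMeasurable CZ hZ_bdd
  have hξi : Integrable ξ μ := .of_bound hξ.aestronglyMeasurable Cξ hξ_bdd
  have hAτi : Integrable (A * τ) μ := hAi.mul_bdd (hτ.mono hm).aestronglyMeasurable hτ_bdd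
  have hwZi : Integrable (w * Z) μ := hZi.bdd_mul (hw.mono hm).aestronglyMeasurable hw_bdd
  refine (condExp_add (hAτi.sub hwZi) hξi m).trans ?_
  filter_upwards [condExp_sub hAτi hwZi m, condExp_mul_of_stronglyMeasurable_right hτ hAτi hAi,
    condExp_mul_of_stronglyMeasurable_left hw hwZi hZi, hAc, hZc, hξc] with ω h h1 h2 h3 h4 h5
  simp only [Pi.add_apply, h, Pi.sub_apply, h1, h2, Pi.mul_apply, h3, h4, h5, Pi.zero_apply]
  ring

theorem ae_abs_mul_sub_mul_add_le (hA_bdd : ∀ᵐ ω ∂μ, |A ω| ≤ CA) (hτ_bdd : ∀ᵐ ω ∂μ, |τ ω| ≤ Cτ)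
    (hw_bdd : ∀ᵐ ω ∂μ, |w ω| ≤ Cw) (hZ_bdd : ∀ᵐ ω ∂μ, |Z ω| ≤ CZ) (hξ_bdd : ∀ᵐ ω ∂μ, |ξ ω| ≤ Cξ) :
    ∀ᵐ ω ∂μ, |A ω * τ ω - w ω * Z ω + ξ ω| ≤ CA * Cτ + Cw * CZ + Cξ := by
  filter_upwards [hA_bdd, hτ_bdd, hw_bdd, hZ_bdd, hξ_bdd] with ω hA hτ hw hZ hξ
  have hAτ : |A ω * τ ω| ≤ CA * Cτ := by
    rw [abs_mul]; exact mul_le_mul hA hτ (abs_nonneg _) ((abs_nonneg _).trans hA)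
  have hwZ : |w ω * Z ω| ≤ Cw * CZ := by
    rw [abs_mul]; exact mul_le_mul hw hZ (abs_nonneg _) ((abs_nonneg _).trans hw)
  exact (abs_add_le _ _).trans (add_le_add ((abs_sub _ _).trans (add_le_add hAτ hwZ)) hξ)

end Residual

theorem stmt_2_general
    {Ω 𝒳 : Type*} [MeasurableSpace Ω] [StandardBorelSpace Ω] [MeasurableSpace 𝒳]
    (P : Measure Ω) [IsProbabilityMeasure P]
    (X : Ω → 𝒳) (hX : Measurable X)
    (W : Ω → ℝ) (hWm : Measurable W) (hWbin : ∀ ω, W ω = 0 ∨ W ω = 1)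
    (Y0 Y1 : Ω → ℝ) (hY0m : Measurable Y0) (hY1m : Measurable Y1)
    (CY : ℝ) (hYbdd : ∀ ω, |Y0 ω| ≤ CY ∧ |Y1 ω| ≤ CY)
    (Y : Ω → ℝ) (hSUTVA : ∀ ω, Y ω = W ω * Y1 ω + (1 - W ω) * Y0 ω)
    (hUnconf : CondIndepFun (sigmaAlg X) hX.comap_le W (fun ω => (Y0 ω, Y1 ω)) P)
    (e : 𝒳 → ℝ) (hem : Measurable e)
    (hprop : P[W|sigmaAlg X] =ᵐ[P] (fun ω => e (X ω)))
    (hoverlap : ∀ᵐ ω ∂P, 0 < e (X ω) ∧ e (X ω) < 1)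
    (μ0 μ1 : 𝒳 → ℝ) (hμ0m : Measurable μ0) (hμ1m : Measurable μ1)
    (Cμ : ℝ) (hμbdd : ∀ x, |μ0 x| ≤ Cμ ∧ |μ1 x| ≤ Cμ)
    (hμ0c : P[Y0|sigmaAlg X] =ᵐ[P] (fun ω => μ0 (X ω)))
    (hμ1c : P[Y1|sigmaAlg X] =ᵐ[P] (fun ω => μ1 (X ω)))
    (S ξ : 𝒳 × ℝ → ℝ) (hSm : Measurable S) (hξm : Measurable ξ)
    (CS : ℝ) (hSbdd : ∀ q, |S q| ≤ CS) (Cξ : ℝ) (hξbdd : ∀ q, |ξ q| ≤ Cξ)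
    (hξ0 : P[(fun ω => ξ (X ω, W ω))|sigmaAlg X] =ᵐ[P] 0)
    (s : 𝒳 → ℝ) (hsm : Measurable s)
    (hs : P[(fun ω => S (X ω, W ω))|sigmaAlg X] =ᵐ[P] (fun ω => s (X ω)))
    (M : ℝ)
    (hstil : ∀ᵐ ω ∂P, 0 < s (X ω) / (e (X ω) * (1 - e (X ω))) ∧
      s (X ω) / (e (X ω) * (1 - e (X ω))) ≤ M) :
    P[(fun ω => S (X ω, W ω) * (μ1 (X ω) - μ0 (X ω)) - (s (X ω) / (e (X ω) * (1 - e (X ω)))) * (W ω - e (X ω)) * Y ω + ξ (X ω, W ω))|sigmaAlg X] =ᵐ[P] 0 ∧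
    ∃ C : ℝ, ∀ᵐ ω ∂P, (P[(fun ω' => (S (X ω', W ω') * (μ1 (X ω') - μ0 (X ω')) - (s (X ω') / (e (X ω') * (1 - e (X ω')))) * (W ω' - e (X ω')) * Y ω' + ξ (X ω', W ω')) ^ 2)|sigmaAlg X]) ω ≤ C := by
  have hXm : Measurable[sigmaAlg X] X := comap_measurable X
  have hY0i : Integrable Y0 P := .of_bound hY0m.aestronglyMeasurable CY (.of_forall (hYbdd · |>.1))
  have hY1i : Integrable Y1 P := .of_bound hY1m.aestronglyMeasurable CY (.of_forall (hYbdd · |>.2))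
  have hYm : Measurable Y := by
    rw [funext hSUTVA]; fun_prop
  have hS_bdd : ∀ᵐ ω ∂P, |S (X ω, W ω)| ≤ CS := .of_forall fun ω ↦ hSbdd _
  have hξ_bdd : ∀ᵐ ω ∂P, |ξ (X ω, W ω)| ≤ Cξ := .of_forall fun ω ↦ hξbdd _
  have hτ_bdd : ∀ᵐ ω ∂P, |μ1 (X ω) - μ0 (X ω)| ≤ Cμ + Cμ :=
    .of_forall fun ω ↦ (abs_sub _ _).trans (add_le_add (hμbdd _).2 (hμbdd _).1)
  have hw_bdd : ∀ᵐ ω ∂P, |s (X ω) / (e (X ω) * (1 - e (X ω)))| ≤ M :=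
    hstil.mono fun ω h ↦ (abs_of_pos h.1).trans_le h.2
  have hZ_bdd : ∀ᵐ ω ∂P, |(W ω - e (X ω)) * Y ω| ≤ CY := by
    filter_upwards [hoverlap] with ω he
    rw [hSUTVA ω]
    exact abs_sub_mul_outcome_le (hWbin ω) he.1.le he.2.le (hYbdd ω).1 (hYbdd ω).2
  have hZc := condExp_sub_mul_outcome_ae_eq hWm hWbin hY0m hY1m hY0i hY1i hSUTVA hUnconf
    hprop hμ0c hμ1c
  have hSc : P[fun ω ↦ S (X ω, W ω) | sigmaAlg X] =ᵐ[P]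
      fun ω ↦ s (X ω) / (e (X ω) * (1 - e (X ω))) * (e (X ω) * (1 - e (X ω))) := by
    filter_upwards [hs, hoverlap] with ω h he
    rw [h, div_mul_cancel₀ _ (mul_pos he.1 (sub_pos.2 he.2)).ne']
  refine ⟨?_, _, ae_condExp_sq_le_of_ae_abs_le (B := CS * (Cμ + Cμ) + M * CY + Cξ) ?_⟩
  · simpa only [mul_assoc] using condExp_mul_sub_mul_add_ae_eq_zero
      (A := fun ω ↦ S (X ω, W ω)) (τ := fun ω ↦ μ1 (X ω) - μ0 (X ω))
      (w := fun ω ↦ s (X ω) / (e (X ω) * (1 - e (X ω)))) (ξ := fun ω ↦ ξ (X ω, W ω))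
      hX.comap_le (hSm.comp (hX.prodMk hWm)) ((hμ1m.sub hμ0m).comp hXm).stronglyMeasurable
      ((hsm.div (hem.mul (measurable_const.sub hem))).comp hXm).stronglyMeasurable
      (by fun_prop) (hξm.comp (hX.prodMk hWm)) hS_bdd hτ_bdd hw_bdd hZ_bdd hξ_bdd hSc hZc hξ0
  · simpa only [mul_assoc] using ae_abs_mul_sub_mul_add_le hS_bdd hτ_bdd hw_bdd hZ_bdd hξ_bdd

theorem stmt_2
    {Ω 𝒳 : Type*} [MeasurableSpace Ω] [StandardBorelSpace Ω] [MeasurableSpace 𝒳]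
    (P : Measure Ω) [IsProbabilityMeasure P]
    (X : Ω → 𝒳) (hX : Measurable X)
    (W : Ω → ℝ) (hWm : Measurable W) (hWbin : ∀ ω, W ω = 0 ∨ W ω = 1)
    (Y0 Y1 : Ω → ℝ) (hY0m : Measurable Y0) (hY1m : Measurable Y1)
    (CY : ℝ) (hYbdd : ∀ ω, |Y0 ω| ≤ CY ∧ |Y1 ω| ≤ CY)
    (Y : Ω → ℝ) (hSUTVA : ∀ ω, Y ω = W ω * Y1 ω + (1 - W ω) * Y0 ω)
    (hUnconf : CondIndepFun (sigmaAlg X) hX.comap_le W (fun ω => (Y0 ω, Y1 ω)) P)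
    (e : 𝒳 → ℝ) (hem : Measurable e)
    (hprop : P[W|sigmaAlg X] =ᵐ[P] (fun ω => e (X ω)))
    (hoverlap : ∀ᵐ ω ∂P, 0 < e (X ω) ∧ e (X ω) < 1)
    (μ0 μ1 : 𝒳 → ℝ) (hμ0m : Measurable μ0) (hμ1m : Measurable μ1)
    (Cμ : ℝ) (hμbdd : ∀ x, |μ0 x| ≤ Cμ ∧ |μ1 x| ≤ Cμ)
    (hμ0c : P[Y0|sigmaAlg X] =ᵐ[P] (fun ω => μ0 (X ω)))
    (hμ1c : P[Y1|sigmaAlg X] =ᵐ[P] (fun ω => μ1 (X ω)))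
    (S ξ : 𝒳 × ℝ → ℝ) (hSm : Measurable S) (hξm : Measurable ξ)
    (CS : ℝ) (hSbdd : ∀ q, |S q| ≤ CS) (Cξ : ℝ) (hξbdd : ∀ q, |ξ q| ≤ Cξ)
    (hξ0 : P[(fun ω => ξ (X ω, W ω))|sigmaAlg X] =ᵐ[P] 0)
    (s : 𝒳 → ℝ) (hsm : Measurable s)
    (hs : P[(fun ω => S (X ω, W ω))|sigmaAlg X] =ᵐ[P] (fun ω => s (X ω)))
    (M : ℝ) (hM : 0 < M)
    (hstil : ∀ᵐ ω ∂P, 0 < s (X ω) / (e (X ω) * (1 - e (X ω))) ∧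
      s (X ω) / (e (X ω) * (1 - e (X ω))) ≤ M) :
    P[(fun ω => S (X ω, W ω) * (μ1 (X ω) - μ0 (X ω)) - (s (X ω) / (e (X ω) * (1 - e (X ω)))) * (W ω - e (X ω)) * Y ω + ξ (X ω, W ω))|sigmaAlg X] =ᵐ[P] 0 ∧
    ∃ C : ℝ, ∀ᵐ ω ∂P, (P[(fun ω' => (S (X ω', W ω') * (μ1 (X ω') - μ0 (X ω')) - (s (X ω') / (e (X ω') * (1 - e (X ω')))) * (W ω' - e (X ω')) * Y ω' + ξ (X ω', W ω')) ^ 2)|sigmaAlg X]) ω ≤ C :=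
  stmt_2_general P X hX W hWm hWbin Y0 Y1 hY0m hY1m CY hYbdd Y hSUTVA hUnconf e hem hprop hoverlap
    μ0 μ1 hμ0m hμ1m Cμ hμbdd hμ0c hμ1c S ξ hSm hξm CS hSbdd Cξ hξbdd hξ0 s hsm hs M hstil
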